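/- Let α > 0, c₃ > 0, s > 0, z > 0. If z < 2(√(α s/(αc₃+1)) - s), then (z/2)(1 - αc₃ + α s/(s + z/2)²) > z. -/
import Mathlib


theorem stmt_2 (α c₃ s z : ℝ) (hα : 0 < α) (hc : 0 < c₃) (hs : 0 < s) (hz : 0 < z)
    (h : z < 2 * (Real.sqrt (α * s / (α * c₃ + 1)) - s)) :
    (z / 2) * (1 - α * c₃ + α * s / (s + z / 2) ^ 2) > z := by
  have ht : 0 < s + z / 2 := by linarith
  have h1 : s + z / 2 < Real.sqrt (α * s / (α * c₃ + 1)) := by linarith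
  have h2 : (s + z / 2) ^ 2 < α * s / (α * c₃ + 1) :=
    (Real.lt_sqrt ht.le).mp h1
  have hd : 0 < α * c₃ + 1 := by positivity
  have h3 : (s + z / 2) ^ 2 * (α * c₃ + 1) < α * s := by
    rw [← lt_div_iff₀ hd]; exact h2
  have h4 : α * c₃ + 1 < α * s / (s + z / 2) ^ 2 := by
    rw [lt_div_iff₀ (by positivity : (0:ℝ) < (s + z / 2) ^ 2)]
    nlinarith
  nlinarith
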